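/- If a ℤ×ℤ matrix A satisfies KA + A^T K = 0 with K_{ij} = (-1)^{i+1} δ_{i+j+1,0}, then K·A_l + (A_l)^T·K = 0 and K·A_u + (A_u)^T·K = 0, where A_u and A_l are the upper (including diagonal) and strictly lower triangular parts of A. -/
import Mathlib


noncomputable section
variable {R : Type*} [CommRing R]

/-- Entrywise product of ℤ×ℤ matrices, using `finsum` (well-defined whenever
each entry's sum has finite support, e.g. for banded matrices or matrices with
one nonzero entry per row/column). -/
def matMul (A B : ℤ → ℤ → R) : ℤ → ℤ → R := fun i j => ∑ᶠ k, A i k * B k j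

/-- Matrix acting on a vector. -/
def matVec (A : ℤ → ℤ → R) (v : ℤ → R) : ℤ → R := fun i => ∑ᶠ k, A i k * v k

/-- Transpose. -/
def transposeM (A : ℤ → ℤ → R) : ℤ → ℤ → R := fun i j => A j i

/-- J with J_{ij} = (-1)^i δ_{i+j,0}. -/
def Jmat : ℤ → ℤ → R := fun i j => if i + j = 0 then (-1 : R) ^ i.natAbs else 0

/-- K with K_{ij} = (-1)^{i+1} δ_{i+j+1,0}. -/
def Kmat : ℤ → ℤ → R := fun i j => if i + j + 1 = 0 then (-1 : R) ^ (i + 1).natAbs else 0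

/-- Shift matrix Λ, Λ_{ij} = δ_{j,i+1}. -/
def Lam : ℤ → ℤ → R := fun i j => if j = i + 1 then 1 else 0

/-- Inverse shift Λ^{-1}, entries δ_{j,i-1}. -/
def LamInv : ℤ → ℤ → R := fun i j => if j = i - 1 then 1 else 0

/-- Upper (including diagonal) triangular part. -/
def upperPart (A : ℤ → ℤ → R) : ℤ → ℤ → R := fun i j => if i ≤ j then A i j else 0

/-- Strictly lower triangular part. -/
def lowerPart (A : ℤ → ℤ → R) : ℤ → ℤ → R := fun i j => if j < i then A i j else 0

/-- Outer product (a⊗b)_{ij} = a_i b_j. -/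
def outer (a b : ℤ → R) : ℤ → ℤ → R := fun i j => a i * b j

/-- Banded: finitely many nonzero diagonals. -/
def Banded (A : ℤ → ℤ → R) : Prop := ∃ N : ℕ, ∀ i j : ℤ, (N : ℤ) < |i - j| → A i j = 0

/-- Identity matrix. -/
def idM : ℤ → ℤ → R := fun i j => if i = j then 1 else 0


lemma matMul_K_left (A : ℤ → ℤ → R) (i j : ℤ) :
    matMul Kmat A i j = (-1:R)^(i+1).natAbs * A (-1-i) j := by
  unfold matMul Kmat
  rw [finsum_eq_single _ (-1-i)]
  · simp [show i + (-1-i) + 1 = 0 by ring]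
  · intro k hk
    have : i + k + 1 ≠ 0 := by omega
    simp [this]

lemma matMul_K_right (A : ℤ → ℤ → R) (i j : ℤ) :
    matMul (transposeM A) Kmat i j = (-1:R)^j.natAbs * A (-1-j) i := by
  unfold matMul Kmat transposeM
  rw [finsum_eq_single _ (-1-j)]
  · have : ((-1-j)+1).natAbs = j.natAbs := by omega
    simp [show (-1-j) + j + 1 = 0 by ring, this, mul_comm]
  · intro k hk
    have : k + j + 1 ≠ 0 := by omega
    simp [this]

theorem ctl_triangular_parts (A : ℤ → ℤ → R)
    (hA : matMul Kmat A + matMul (transposeM A) Kmat = 0) :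
    matMul Kmat (lowerPart A) + matMul (transposeM (lowerPart A)) Kmat = 0 ∧
    matMul Kmat (upperPart A) + matMul (transposeM (upperPart A)) Kmat = 0 := by
  have key : ∀ i j : ℤ, (-1:R)^(i+1).natAbs * A (-1-i) j + (-1:R)^j.natAbs * A (-1-j) i = 0 := by
    intro i j
    have := congrFun (congrFun hA i) j
    simpa [matMul_K_left, matMul_K_right] using this
  constructor
  · funext i j
    simp only [Pi.add_apply, matMul_K_left, matMul_K_right, lowerPart, Pi.zero_apply]
    by_cases h : j < -1 - i
    · have h2 : i < -1 - j := by omega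
      rw [if_pos h, if_pos h2]; exact key i j
    · have h2 : ¬ i < -1 - j := by omega
      rw [if_neg h, if_neg h2]; ring
  · funext i j
    simp only [Pi.add_apply, matMul_K_left, matMul_K_right, upperPart, Pi.zero_apply]
    by_cases h : -1 - i ≤ j
    · have h2 : -1 - j ≤ i := by omega
      rw [if_pos h, if_pos h2]; exact key i j
    · have h2 : ¬ -1 - j ≤ i := by omega
      rw [if_neg h, if_neg h2]; ring
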